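/- arXiv:2404.11606 — 4 statements merged into one kernel-verified Lean document; each statement's English description precedes it below -/
import Mathlib

section
/- Suppose f(y) > 0 for all y ∈ Y, and suppose α > p*/q*. Then the minimum of the loss function L over Y equals p*, i.e., min_{y ∈ Y} L(y) = p* (Proposition 1: the loss function is optimal). -/
/-!
Every feasible point has loss `f y ≥ p*`, with equality at a feasible minimiser. An infeasible
point has loss `α (f y + g y) ≥ α q* > p*`: positivity of `f` makes `p*` and `q*` positive, so
`α > p*/q* > 0` and the inequalities may be multiplied by `α`.
-/

theorem Finset.inf'_eq_of_mem_of_forall_le {ι α : Type*} [SemilatticeInf α] {s : Finset ι}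
    (H : s.Nonempty) {f : ι → α} {a : α} {i : ι} (hi : i ∈ s) (hfi : f i = a)
    (h : ∀ j ∈ s, a ≤ f j) : s.inf' H f = a :=
  le_antisymm (hfi ▸ inf'_le f hi) (le_inf' H f h)

section CMPE

variable {Y : Type*} (f g : Y → ℝ) (α : ℝ)

noncomputable def cmpeLoss (y : Y) : ℝ := if g y ≤ 0 then f y else α * (f y + g y)

variable {f g α}

theorem cmpeLoss_of_feasible {y : Y} (hy : g y ≤ 0) : cmpeLoss f g α y = f y :=
  if_pos hy

theorem le_cmpeLoss {p q : ℝ} (hp : ∀ y, g y ≤ 0 → p ≤ f y) (hq : ∀ y, 0 < g y → q ≤ f y + g y)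
    (hα₀ : 0 ≤ α) (hpq : p ≤ α * q) (y : Y) : p ≤ cmpeLoss f g α y := by
  unfold cmpeLoss
  split_ifs with hy
  · exact hp y hy
  · exact hpq.trans (mul_le_mul_of_nonneg_left (hq y (not_le.1 hy)) hα₀)

end CMPE

/-- Proposition 1 (optimal loss): if `f` is strictly positive and `α > p*/q*`,
then the minimum of the loss `L` over `Y` equals `p*`. -/
theorem cmpe_loss_min_eq_pstar {Y : Type*} [Fintype Y] [Nonempty Y]
    (f g : Y → ℝ) (α : ℝ)
    (hfeas : (Finset.univ.filter (fun y => g y ≤ 0)).Nonempty)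
    (hinfeas : (Finset.univ.filter (fun y => 0 < g y)).Nonempty)
    (hf : ∀ y, 0 < f y)
    (pstar qstar : ℝ)
    (hp : pstar = (Finset.univ.filter (fun y => g y ≤ 0)).inf' hfeas f)
    (hq : qstar = (Finset.univ.filter (fun y => 0 < g y)).inf' hinfeas (fun y => f y + g y))
    (hα : α > pstar / qstar)
    (L : Y → ℝ)
    (hL : ∀ y, L y = if g y ≤ 0 then f y else α * (f y + g y)) :
    Finset.univ.inf' Finset.univ_nonempty L = pstar := by
  obtain rfl : L = cmpeLoss f g α := funext hL
  have hp_le (y : Y) (hy : g y ≤ 0) : pstar ≤ f y := hp ▸ Finset.inf'_le f (by simpa using hy)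
  have hq_le (y : Y) (hy : 0 < g y) : qstar ≤ f y + g y :=
    hq ▸ Finset.inf'_le (fun y => f y + g y) (by simpa using hy)
  have hp_pos : 0 < pstar := hp ▸ (Finset.lt_inf'_iff _).2 fun y _ => hf y
  have hq_pos : 0 < qstar :=
    hq ▸ (Finset.lt_inf'_iff _).2 fun y hy => add_pos (hf y) (Finset.mem_filter.1 hy).2
  have hα₀ : 0 < α := (div_pos hp_pos hq_pos).trans hα
  have hpq : pstar < α * qstar := (div_lt_iff₀ hq_pos).1 hα
  obtain ⟨y₀, hy₀, hfy₀⟩ := Finset.exists_mem_eq_inf' hfeas f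
  refine Finset.inf'_eq_of_mem_of_forall_le _ (Finset.mem_univ y₀) ?_ fun y _ =>
    le_cmpeLoss hp_le hq_le hα₀.le hpq.le y
  rw [cmpeLoss_of_feasible (Finset.mem_filter.1 hy₀).2, hp, hfy₀]
end

section
/- Suppose f(y) > 0 for all y ∈ Y, and suppose α > p*/q*. Then the loss function satisfies the Consistent Loss property: for every infeasible point y ∈ Y (i.e., every y with g(y) > 0), L(y) > p*, so the loss of every infeasible assignment is strictly higher than the optimal value p* of the CMPE problem. -/
theorem lt_mul_of_div_lt_of_le {p q α x : ℝ} (hp : 0 ≤ p) (hq : 0 < q) (hα : p / q < α)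
    (hx : q ≤ x) : p < α * x :=
  have hα_pos : 0 < α := (div_nonneg hp hq.le).trans_lt hα
  calc p = p / q * q := (div_mul_cancel₀ p hq.ne').symm
    _ < α * q := mul_lt_mul_of_pos_right hα hq
    _ ≤ α * x := mul_le_mul_of_nonneg_left hx hα_pos.le

theorem cmpe_loss_consistent_general {Y : Type*} [Fintype Y]
    (f g : Y → ℝ) (α : ℝ)
    (hfeas : (Finset.univ.filter (fun y => g y ≤ 0)).Nonempty)
    (hinfeas : (Finset.univ.filter (fun y => 0 < g y)).Nonempty)
    (hf : ∀ y, 0 < f y)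
    (pstar qstar : ℝ)
    (hp : pstar = (Finset.univ.filter (fun y => g y ≤ 0)).inf' hfeas f)
    (hq : qstar = (Finset.univ.filter (fun y => 0 < g y)).inf' hinfeas (fun y => f y + g y))
    (hα : α > pstar / qstar)
    (L : Y → ℝ)
    (hL : ∀ y, L y = if g y ≤ 0 then f y else α * (f y + g y)) :
    ∀ y : Y, 0 < g y → L y > pstar := by
  intro y hy
  have hp_pos : 0 < pstar := hp ▸ (Finset.lt_inf'_iff _).2 fun z _ => hf z
  have hq_pos : 0 < qstar :=
    hq ▸ (Finset.lt_inf'_iff _).2 fun z hz => add_pos (hf z) (Finset.mem_filter.1 hz).2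
  have hq_le : qstar ≤ f y + g y := hq ▸ Finset.inf'_le _ (by simpa using hy)
  rw [hL y, if_neg hy.not_ge]
  exact lt_mul_of_div_lt_of_le hp_pos.le hq_pos hα hq_le

/-- Consistent Loss property: if `f` is strictly positive and `α > p*/q*`,
then the loss of every infeasible assignment exceeds the optimal value `p*`. -/
theorem cmpe_loss_consistent {Y : Type*} [Fintype Y] [Nonempty Y]
    (f g : Y → ℝ) (α : ℝ)
    (hfeas : (Finset.univ.filter (fun y => g y ≤ 0)).Nonempty)
    (hinfeas : (Finset.univ.filter (fun y => 0 < g y)).Nonempty)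
    (hf : ∀ y, 0 < f y)
    (pstar qstar : ℝ)
    (hp : pstar = (Finset.univ.filter (fun y => g y ≤ 0)).inf' hfeas f)
    (hq : qstar = (Finset.univ.filter (fun y => 0 < g y)).inf' hinfeas (fun y => f y + g y))
    (hα : α > pstar / qstar)
    (L : Y → ℝ)
    (hL : ∀ y, L y = if g y ≤ 0 then f y else α * (f y + g y)) :
    ∀ y : Y, 0 < g y → L y > pstar :=
  cmpe_loss_consistent_general f g α hfeas hinfeas hf pstar qstar hp hq hα L hL
end

section
/- Suppose f(y) > 0 for all y ∈ Y. Let P and Q be real numbers with P ≥ p* (an upper bound on p*) and 0 < Q ≤ q* (a positive lower bound on q*). If α > P/Q, then α > p*/q*; hence any α exceeding the ratio of an upper bound on p* to a positive lower bound on q* satisfies the consistency condition, and the minimum of the loss L over Y equals p*. -/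
open Finset

lemma div_lt_of_le_of_le_of_div_lt {p q P Q α : ℝ} (hp : 0 ≤ p) (hpP : p ≤ P) (hQ : 0 < Q)
    (hQq : Q ≤ q) (hα : P / Q < α) : p / q < α :=
  (div_le_div₀ (hp.trans hpP) hpP hQ hQq).trans_lt hα

/-- An infeasible point has loss `α (f + g) ≥ α q* ≥ p*`, so the minimum of the loss is attained
at a feasible minimiser. -/
theorem inf'_loss_eq_feasible_inf' {Y : Type*} [Fintype Y] [Nonempty Y] (f g L : Y → ℝ) (α : ℝ)
    (hfeas : (univ.filter (fun y => g y ≤ 0)).Nonempty)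
    (hinfeas : (univ.filter (fun y => 0 < g y)).Nonempty) (hα : 0 ≤ α)
    (hcons : (univ.filter (fun y => g y ≤ 0)).inf' hfeas f ≤
      α * (univ.filter (fun y => 0 < g y)).inf' hinfeas (fun y => f y + g y))
    (hL : ∀ y, L y = if g y ≤ 0 then f y else α * (f y + g y)) :
    univ.inf' univ_nonempty L = (univ.filter (fun y => g y ≤ 0)).inf' hfeas f := by
  obtain ⟨y₀, hy₀, hfy₀⟩ := exists_mem_eq_inf' hfeas f
  refine le_antisymm ?_ (le_inf' _ _ fun y _ => ?_)
  · calc univ.inf' univ_nonempty L ≤ L y₀ := inf'_le L (mem_univ y₀)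
      _ = _ := by rw [hL, if_pos (mem_filter.1 hy₀).2, hfy₀]
  · rw [hL]
    split_ifs with hgy
    · exact inf'_le f (by simpa using hgy)
    · have hq : (univ.filter (fun y => 0 < g y)).inf' hinfeas (fun y => f y + g y) ≤ f y + g y :=
        inf'_le (fun y => f y + g y) (by simpa using hgy)
      exact hcons.trans (mul_le_mul_of_nonneg_left hq hα)

/-- If `P ≥ p*` and `0 < Q ≤ q*`, then any `α > P/Q` satisfies `α > p*/q*`,
and hence the minimum of the loss `L` over `Y` equals `p*`. -/
theorem cmpe_bounds_give_consistency {Y : Type*} [Fintype Y] [Nonempty Y]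
    (f g : Y → ℝ) (α : ℝ)
    (hfeas : (Finset.univ.filter (fun y => g y ≤ 0)).Nonempty)
    (hinfeas : (Finset.univ.filter (fun y => 0 < g y)).Nonempty)
    (hf : ∀ y, 0 < f y)
    (pstar qstar : ℝ)
    (hp : pstar = (Finset.univ.filter (fun y => g y ≤ 0)).inf' hfeas f)
    (hq : qstar = (Finset.univ.filter (fun y => 0 < g y)).inf' hinfeas (fun y => f y + g y))
    (P Q : ℝ) (hP : P ≥ pstar) (hQpos : 0 < Q) (hQ : Q ≤ qstar)
    (hα : α > P / Q)
    (L : Y → ℝ)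
    (hL : ∀ y, L y = if g y ≤ 0 then f y else α * (f y + g y)) :
    α > pstar / qstar ∧ Finset.univ.inf' Finset.univ_nonempty L = pstar := by
  have hq_pos : 0 < qstar := hQpos.trans_le hQ
  have hp_pos : 0 < pstar := by
    obtain ⟨y₀, -, hfy₀⟩ := exists_mem_eq_inf' hfeas f
    exact hp ▸ hfy₀ ▸ hf y₀
  have hcons : pstar / qstar < α := div_lt_of_le_of_le_of_div_lt hp_pos.le hP hQpos hQ hα
  have hα_pos : 0 < α := (div_pos hp_pos hq_pos).trans hcons
  refine ⟨hcons, ?_⟩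
  subst hp hq
  exact inf'_loss_eq_feasible_inf' f g L α hfeas hinfeas hα_pos.le
    ((div_lt_iff₀ hq_pos).1 hcons).le hL
end

section
/- Adding the quadratic penalty to the infeasible branch preserves the global optima: suppose f(y) > 0 for all y ∈ Y and α > p*/q*, and let ρ ≥ 0. Define the penalized loss L_ρ(y) = f(y) if g(y) ≤ 0 and L_ρ(y) = α·(f(y) + g(y)) + ρ·(max(0, g(y)))² if g(y) > 0. Then min_{y ∈ Y} L_ρ(y) = p*, and the set of global minimizers of L_ρ equals the set of optimal solutions of the CMPE problem, namely { y ∈ Y : g(y) ≤ 0 and f(y) = p* }. -/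
/-- Adding the quadratic penalty to the infeasible branch preserves the global optima:
if `f > 0`, `α > p*/q*` and `ρ ≥ 0`, then the penalized loss `L_ρ` has minimum `p*`,
and its global minimizers are exactly the optimal solutions of CMPE. -/
theorem cmpe_penalized_loss_preserves_optima {Y : Type*} [Fintype Y] [Nonempty Y]
    (f g : Y → ℝ) (α ρ : ℝ) (hρ : 0 ≤ ρ)
    (hfeas : (Finset.univ.filter (fun y => g y ≤ 0)).Nonempty)
    (hinfeas : (Finset.univ.filter (fun y => 0 < g y)).Nonempty)
    (hf : ∀ y, 0 < f y)
    (pstar qstar : ℝ)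
    (hp : pstar = (Finset.univ.filter (fun y => g y ≤ 0)).inf' hfeas f)
    (hq : qstar = (Finset.univ.filter (fun y => 0 < g y)).inf' hinfeas (fun y => f y + g y))
    (hα : α > pstar / qstar)
    (Lρ : Y → ℝ)
    (hLρ : ∀ y, Lρ y =
      if g y ≤ 0 then f y else α * (f y + g y) + ρ * (max 0 (g y)) ^ 2) :
    Finset.univ.inf' Finset.univ_nonempty Lρ = pstar ∧
    {y : Y | ∀ z : Y, Lρ y ≤ Lρ z} = {y : Y | g y ≤ 0 ∧ f y = pstar} := by
  -- lower bounds
  have hple : ∀ y, g y ≤ 0 → pstar ≤ f y := by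
    intro y hy
    rw [hp]
    exact Finset.inf'_le f (by simp [hy])
  have hqle : ∀ y, 0 < g y → qstar ≤ f y + g y := by
    intro y hy
    rw [hq]
    exact Finset.inf'_le _ (by simp [hy])
  -- witnesses
  obtain ⟨y0, hy0mem, hy0⟩ := Finset.exists_mem_eq_inf' hfeas f
  rw [Finset.mem_filter] at hy0mem
  have hy0g : g y0 ≤ 0 := hy0mem.2
  have hy0f : f y0 = pstar := by rw [hp, hy0]
  obtain ⟨y1, hy1mem, hy1⟩ := Finset.exists_mem_eq_inf' hinfeas (fun y => f y + g y)
  rw [Finset.mem_filter] at hy1mem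
  have hqpos : 0 < qstar := by
    rw [hq, hy1]; exact add_pos (hf y1) hy1mem.2
  have hppos : 0 < pstar := by rw [← hy0f]; exact hf y0
  have hαpos : 0 < α := lt_trans (div_pos hppos hqpos) hα
  have hkey : pstar < α * qstar := (div_lt_iff₀ hqpos).mp hα
  -- p* < Lρ y for infeasible y
  have hinf_gt : ∀ y, 0 < g y → pstar < Lρ y := by
    intro y hy
    rw [hLρ y, if_neg (not_le.mpr hy)]
    have h1 : α * qstar ≤ α * (f y + g y) :=
      mul_le_mul_of_nonneg_left (hqle y hy) hαpos.le
    have h2 : 0 ≤ ρ * (max 0 (g y)) ^ 2 := mul_nonneg hρ (sq_nonneg _)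
    linarith
  have hlb : ∀ y, pstar ≤ Lρ y := by
    intro y
    by_cases hy : g y ≤ 0
    · rw [hLρ y, if_pos hy]; exact hple y hy
    · exact (hinf_gt y (not_le.mp hy)).le
  have hLy0 : Lρ y0 = pstar := by rw [hLρ y0, if_pos hy0g, hy0f]
  constructor
  · apply le_antisymm
    · calc Finset.univ.inf' Finset.univ_nonempty Lρ ≤ Lρ y0 :=
            Finset.inf'_le _ (Finset.mem_univ _)
        _ = pstar := hLy0
    · exact Finset.le_inf' _ _ fun y _ => hlb y
  · ext y
    simp only [Set.mem_setOf_eq]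
    constructor
    · intro hmin
      have hle : Lρ y ≤ pstar := hLy0 ▸ hmin y0
      have heq : Lρ y = pstar := le_antisymm hle (hlb y)
      by_cases hy : g y ≤ 0
      · refine ⟨hy, ?_⟩
        rw [hLρ y, if_pos hy] at heq
        exact heq
      · exact absurd heq (hinf_gt y (not_le.mp hy)).ne'
    · rintro ⟨hy, hfy⟩ z
      rw [hLρ y, if_pos hy, hfy]
      exact hlb z
end
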